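/- The QVE Mx = a + b(x,x) has at least one nonnegative solution if and only if Condition A1 holds. -/

import Mathlib

open Matrix Filter Topology

/-- The spectral radius of a real square matrix: the supremum of the norms of
its complex eigenvalues. -/
noncomputable def specRad {n : ℕ} (A : Matrix (Fin n) (Fin n) ℝ) : ℝ :=
  sSup {r : ℝ | ∃ μ ∈ spectrum ℂ (A.map (Complex.ofReal)), ‖μ‖ = r}

/-- An M-matrix: a matrix of the form `s • 1 - P` with `P ≥ 0` and `ρ(P) ≤ s`. -/
def IsMMat {n : ℕ} (A : Matrix (Fin n) (Fin n) ℝ) : Prop :=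
  ∃ (s : ℝ) (P : Matrix (Fin n) (Fin n) ℝ),
    (∀ i j, 0 ≤ P i j) ∧ specRad P ≤ s ∧ A = s • (1 : Matrix (Fin n) (Fin n) ℝ) - P

/-- A nonsingular M-matrix: an M-matrix that is invertible. -/
def IsNsMMat {n : ℕ} (A : Matrix (Fin n) (Fin n) ℝ) : Prop :=
  IsMMat A ∧ IsUnit A.det

/-- A linear map `l : ℝⁿ → ℝᵐ` is weakly positive if `l x ≥ 0` and `l x ≠ 0`
whenever `x ≥ 0` and `x ≠ 0` (all inequalities entrywise). -/
def WeaklyPos {n m : ℕ} (l : (Fin n → ℝ) →ₗ[ℝ] (Fin m → ℝ)) : Prop :=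
  ∀ x : Fin n → ℝ, 0 ≤ x → x ≠ 0 → 0 ≤ l x ∧ l x ≠ 0

/-!
If `x* ≥ 0` solves the equation, Condition A1 holds with `l = id` and `z = x*`, because
`F x = M⁻¹ (a + b(x,x))` is monotone on the nonnegative orthant (`M⁻¹ ≥ 0`) and fixes `x*`.
Conversely, the iterates of `F` from `0` increase and stay in `{x ≥ 0 | l x ≤ z}`, which is
bounded because `l` is weakly positive; their supremum is a fixed point of `F` by continuity.

Nonnegativity of `M⁻¹ = (s • 1 - P)⁻¹`: for `t > ρ(P)` Gelfand's formula gives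
`‖(P / t) ^ k‖ < 1` for some `k`, so `(1 - P / t)⁻¹ = (∑ i < k, (P / t) ^ i) * (1 - (P / t) ^ k)⁻¹`
is a product of nonnegative matrices (the second one a Neumann series). Letting `t ↓ s` and
using continuity of the inverse at the invertible `M` covers the case `s = ρ(P)`.
-/

namespace Matrix

lemma mul_apply_nonneg {l m n α : Type*} [Fintype m] [Semiring α] [PartialOrder α]
    [IsOrderedRing α] {A : Matrix l m α} {B : Matrix m n α} (hA : ∀ i j, 0 ≤ A i j)
    (hB : ∀ i j, 0 ≤ B i j) (i : l) (j : n) : 0 ≤ (A * B) i j :=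
  Finset.sum_nonneg fun k _ => mul_nonneg (hA i k) (hB k j)

lemma mulVec_mono_of_nonneg {m n α : Type*} [Fintype n] [Semiring α] [PartialOrder α]
    [IsOrderedRing α] {A : Matrix m n α} (hA : ∀ i j, 0 ≤ A i j) : Monotone (A *ᵥ ·) :=
  fun _ _ huv i => Finset.sum_le_sum fun j _ => mul_le_mul_of_nonneg_left (huv j) (hA i j)

lemma inv_mulVec_eq_iff {n α : Type*} [Fintype n] [DecidableEq n] [CommRing α]
    {A : Matrix n n α} (hA : IsUnit A.det) {u v : n → α} :
    A⁻¹ *ᵥ u = v ↔ A *ᵥ v = u := by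
  constructor <;> rintro rfl
  · rw [mulVec_mulVec, mul_nonsing_inv _ hA, one_mulVec]
  · rw [mulVec_mulVec, nonsing_inv_mul _ hA, one_mulVec]

end Matrix

section SpecRad

variable {n : ℕ}

lemma specRad_nonneg (A : Matrix (Fin n) (Fin n) ℝ) : 0 ≤ specRad A :=
  Real.sSup_nonneg (by rintro _ ⟨μ, _, rfl⟩; exact norm_nonneg μ)

lemma norm_le_specRad (A : Matrix (Fin n) (Fin n) ℝ) {μ : ℂ}
    (hμ : μ ∈ spectrum ℂ (A.map Complex.ofReal)) : ‖μ‖ ≤ specRad A :=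
  le_csSup ((finite_spectrum _).image (‖·‖)).bddAbove ⟨μ, hμ, rfl⟩

lemma spectralRadius_map_ofReal_le_specRad (A : Matrix (Fin n) (Fin n) ℝ) :
    spectralRadius ℂ (A.map Complex.ofReal) ≤ ENNReal.ofReal (specRad A) :=
  iSup₂_le fun μ hμ => by
    rw [← enorm_eq_nnnorm, ← ofReal_norm]
    exact ENNReal.ofReal_le_ofReal (norm_le_specRad A hμ)

end SpecRad

section LinftyOpNorm

attribute [local instance] Matrix.linftyOpNormedRing Matrix.linftyOpNormedAlgebra

namespace Matrix

variable {ι : Type*} [Fintype ι] [DecidableEq ι]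

lemma inv_one_sub_nonneg_of_norm_lt_one {A : Matrix ι ι ℝ} (hA : ∀ i j, 0 ≤ A i j)
    (h : ‖A‖ < 1) (i j : ι) : 0 ≤ (1 - A)⁻¹ i j := by
  rw [nonsing_inv_eq_ringInverse]
  exact (Pi.hasSum.1 (Pi.hasSum.1 (hasSum_geom_series_inverse A h) i) j).nonneg
    fun k => pow_apply_nonneg hA k i j

lemma isUnit_det_one_sub_and_inv_nonneg_of_norm_pow_lt_one {A : Matrix ι ι ℝ}
    (hA : ∀ i j, 0 ≤ A i j) {k : ℕ} (h : ‖A ^ k‖ < 1) :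
    IsUnit (1 - A).det ∧ ∀ i j, 0 ≤ (1 - A)⁻¹ i j := by
  have hunit : IsUnit (1 - A ^ k).det :=
    (isUnit_iff_isUnit_det _).1 (Units.oneSub (A ^ k) h).isUnit
  have hright : (1 - A) * ((∑ i ∈ Finset.range k, A ^ i) * (1 - A ^ k)⁻¹) = 1 := by
    rw [← mul_assoc, mul_neg_geom_sum, mul_nonsing_inv _ hunit]
  refine ⟨isUnit_det_of_right_inverse hright, ?_⟩
  rw [inv_eq_right_inv hright]
  refine mul_apply_nonneg (fun i j => ?_)
    (inv_one_sub_nonneg_of_norm_lt_one (pow_apply_nonneg hA k) h)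
  rw [sum_apply]
  exact Finset.sum_nonneg fun m _ => pow_apply_nonneg hA m i j

lemma norm_map_ofReal (A : Matrix ι ι ℝ) : ‖A.map Complex.ofReal‖ = ‖A‖ := by
  simp [linfty_opNorm_def, Complex.nnnorm_real]

end Matrix

variable {n : ℕ}

lemma exists_norm_pow_lt_pow_of_specRad_lt {A : Matrix (Fin n) (Fin n) ℝ} {t : ℝ}
    (h : specRad A < t) : ∃ k, ‖A ^ k‖ < t ^ k := by
  have ht : 0 < t := (specRad_nonneg A).trans_lt h
  have hρ : spectralRadius ℂ (A.map Complex.ofReal) < ENNReal.ofReal t :=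
    (spectralRadius_map_ofReal_le_specRad A).trans_lt ((ENNReal.ofReal_lt_ofReal_iff ht).2 h)
  obtain ⟨k, hk, hk0⟩ := ((spectrum.pow_norm_pow_one_div_tendsto_nhds_spectralRadius _
    ).eventually_lt_const hρ |>.and (eventually_gt_atTop 0)).exists
  have hpow : A.map Complex.ofReal ^ k = (A ^ k).map Complex.ofReal :=
    (A.map_pow Complex.ofRealHom k).symm
  refine ⟨k, ?_⟩
  rwa [ENNReal.ofReal_lt_ofReal_iff ht, one_div,
    Real.rpow_inv_lt_iff_of_pos (norm_nonneg _) ht.le (by positivity), Real.rpow_natCast, hpow,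
    Matrix.norm_map_ofReal] at hk

lemma isUnit_det_smul_one_sub_and_inv_nonneg_of_specRad_lt {P : Matrix (Fin n) (Fin n) ℝ}
    (hP : ∀ i j, 0 ≤ P i j) {t : ℝ} (h : specRad P < t) :
    IsUnit (t • 1 - P).det ∧ ∀ i j, 0 ≤ (t • 1 - P)⁻¹ i j := by
  have ht : 0 < t := (specRad_nonneg P).trans_lt h
  obtain ⟨k, hk⟩ := exists_norm_pow_lt_pow_of_specRad_lt h
  have hQ : ∀ i j, 0 ≤ (t⁻¹ • P) i j := fun i j => mul_nonneg (inv_nonneg.2 ht.le) (hP i j)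
  have hQk : ‖(t⁻¹ • P) ^ k‖ < 1 := by
    rwa [smul_pow, norm_smul, norm_pow, norm_inv, Real.norm_of_nonneg ht.le, inv_pow,
      inv_mul_lt_one₀ (by positivity)]
  obtain ⟨hunit, hnonneg⟩ := Matrix.isUnit_det_one_sub_and_inv_nonneg_of_norm_pow_lt_one hQ hQk
  have hsmul : t • 1 - P = t • (1 - t⁻¹ • P) := by
    rw [smul_sub, smul_smul, mul_inv_cancel₀ ht.ne', one_smul]
  have hright : (t • 1 - P) * (t⁻¹ • (1 - t⁻¹ • P)⁻¹) = 1 := by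
    rw [hsmul, smul_mul_smul_comm, mul_inv_cancel₀ ht.ne', one_smul, mul_nonsing_inv _ hunit]
  refine ⟨isUnit_det_of_right_inverse hright, ?_⟩
  rw [inv_eq_right_inv hright]
  exact fun i j => mul_nonneg (inv_nonneg.2 ht.le) (hnonneg i j)

end LinftyOpNorm

lemma IsNsMMat.inv_apply_nonneg {n : ℕ} {M : Matrix (Fin n) (Fin n) ℝ} (hM : IsNsMMat M)
    (i j : Fin n) : 0 ≤ M⁻¹ i j := by
  obtain ⟨⟨s, P, hP, hsP, rfl⟩, hdet⟩ := hM
  have hcont : ContinuousAt (fun t : ℝ => (t • 1 - P)⁻¹) s :=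
    (continuousAt_matrix_inv _ (by simpa using NormedRing.inverse_continuousAt hdet.unit)).comp
      (by fun_prop)
  have hlim := tendsto_pi_nhds.1 (tendsto_pi_nhds.1
    (hcont.tendsto.mono_left (nhdsWithin_le_nhds (s := Set.Ioi s))) i) j
  refine ge_of_tendsto hlim ?_
  filter_upwards [self_mem_nhdsWithin] with t ht
  exact (isUnit_det_smul_one_sub_and_inv_nonneg_of_specRad_lt hP (hsP.trans_lt ht)).2 i j

lemma LinearMap.monotoneOn_apply_self {E F : Type*} [AddCommGroup E] [PartialOrder E]
    [IsOrderedAddMonoid E] [Module ℝ E] [AddCommGroup F] [PartialOrder F]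
    [IsOrderedAddMonoid F] [Module ℝ F] {b : E →ₗ[ℝ] E →ₗ[ℝ] F}
    (hb : ∀ x y, 0 ≤ x → 0 ≤ y → 0 ≤ b x y) :
    MonotoneOn (fun x => b x x) (Set.Ici 0) := by
  intro x hx y _ hxy
  have hdiff : b y y - b x x = b (y - x) y + b x (y - x) := by
    rw [map_sub, LinearMap.sub_apply, map_sub]
    abel
  have hxy' : 0 ≤ y - x := sub_nonneg.2 hxy
  exact sub_nonneg.1 (hdiff ▸ add_nonneg (hb _ _ hxy' (le_trans hx hxy)) (hb _ _ hx hxy'))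

namespace WeaklyPos

variable {n m : ℕ} {l : (Fin n → ℝ) →ₗ[ℝ] (Fin m → ℝ)}

lemma map_nonneg (hl : WeaklyPos l) {x : Fin n → ℝ} (hx : 0 ≤ x) : 0 ≤ l x := by
  rcases eq_or_ne x 0 with rfl | hx0
  · rw [map_zero]
  · exact (hl x hx hx0).1

lemma bddAbove (hl : WeaklyPos l) (z : Fin m → ℝ) : BddAbove {x | 0 ≤ x ∧ l x ≤ z} := by
  have hpos : ∀ i, ∃ j, 0 < l (Pi.single i 1) j := by
    intro i
    obtain ⟨h0, hne⟩ :=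
      hl _ (Pi.single_nonneg.2 zero_le_one) (Pi.single_ne_zero_iff.2 one_ne_zero)
    by_contra! h
    exact hne (le_antisymm h h0)
  choose j hj using hpos
  refine ⟨fun i => z (j i) / l (Pi.single i 1) (j i), fun x ⟨hx, hxz⟩ i => ?_⟩
  have hsingle : Pi.single i (x i) ≤ x := by
    intro k
    rcases eq_or_ne k i with rfl | hk
    · simp
    · simpa [hk] using hx k
  rw [le_div_iff₀ (hj i)]
  have hsmul : Pi.single i (x i) = x i • Pi.single i (1 : ℝ) := by
    rw [← Pi.single_smul, smul_eq_mul, mul_one]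
  calc x i * l (Pi.single i 1) (j i) = l (Pi.single i (x i)) (j i) := by
        rw [hsmul, map_smul]; rfl
    _ ≤ l x (j i) := sub_nonneg.1 (by simpa using hl.map_nonneg (sub_nonneg.2 hsingle) (j i))
    _ ≤ z (j i) := hxz (j i)

end WeaklyPos

theorem Function.exists_isFixedPt_of_monotoneOn_Ici {α : Type*} [ConditionallyCompleteLattice α]
    [TopologicalSpace α] [SupConvergenceClass α] [T2Space α] {f : α → α} {x₀ : α}
    (hf : MonotoneOn f (Set.Ici x₀)) (hfc : Continuous f) (hx₀ : x₀ ≤ f x₀)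
    (hbdd : BddAbove (Set.range fun k => f^[k] x₀)) : ∃ x, x₀ ≤ x ∧ IsFixedPt f x := by
  have hstep : ∀ k, x₀ ≤ f^[k] x₀ ∧ f^[k] x₀ ≤ f^[k + 1] x₀ := by
    intro k
    induction k with
    | zero => exact ⟨le_rfl, hx₀⟩
    | succ k ih =>
      refine ⟨ih.1.trans ih.2, ?_⟩
      rw [iterate_succ_apply' f k, iterate_succ_apply' f (k + 1)]
      exact hf ih.1 (ih.1.trans ih.2) ih.2
  have hlim := tendsto_atTop_ciSup (monotone_nat_of_le_succ fun k => (hstep k).2) hbdd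
  have hlim_succ := hlim.comp (tendsto_add_atTop_nat 1)
  simp only [Function.comp_def, iterate_succ_apply'] at hlim_succ
  exact ⟨_, le_ciSup_of_le hbdd 0 le_rfl,
    tendsto_nhds_unique ((hfc.tendsto _).comp hlim) hlim_succ⟩

/-- The QVE `M x = a + b(x,x)` (with `M` a nonsingular M-matrix, `a ≥ 0`, and `b`
bilinear and nonnegative) has a nonnegative solution if and only if Condition A1 holds. -/
theorem qve_has_solution_iff_A1 {n : ℕ} (M : Matrix (Fin n) (Fin n) ℝ)
    (hM : IsNsMMat M) (a : Fin n → ℝ) (ha : 0 ≤ a)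
    (b : (Fin n → ℝ) →ₗ[ℝ] (Fin n → ℝ) →ₗ[ℝ] (Fin n → ℝ))
    (hb : ∀ x y : Fin n → ℝ, 0 ≤ x → 0 ≤ y → 0 ≤ b x y) :
    (∃ x : Fin n → ℝ, 0 ≤ x ∧ M *ᵥ x = a + b x x) ↔
      (∃ (m : ℕ) (l : (Fin n → ℝ) →ₗ[ℝ] (Fin m → ℝ)) (z : Fin m → ℝ),
        WeaklyPos l ∧ 0 ≤ z ∧
          ∀ x : Fin n → ℝ, 0 ≤ x → l x ≤ z → l (M⁻¹ *ᵥ (a + b x x)) ≤ z) := by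
  set F : (Fin n → ℝ) → (Fin n → ℝ) := fun x => M⁻¹ *ᵥ (a + b x x) with hF
  have hsol : ∀ x, M *ᵥ x = a + b x x ↔ F x = x := fun x => (inv_mulVec_eq_iff hM.2).symm
  have hFmono : MonotoneOn F (Set.Ici 0) := fun x hx y hy hxy =>
    mulVec_mono_of_nonneg hM.inv_apply_nonneg <|
      add_le_add_right (LinearMap.monotoneOn_apply_self hb hx hy hxy) a
  constructor
  · rintro ⟨x₀, hx₀, hx₀F⟩
    refine ⟨n, LinearMap.id, x₀, fun x hx hx' => ⟨hx, hx'⟩, hx₀, fun x hx hxx₀ => ?_⟩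
    exact (hsol x₀).1 hx₀F ▸ hFmono hx hx₀ hxx₀
  · rintro ⟨m, l, z, hl, hz, hA1⟩
    have hF0 : 0 ≤ F 0 := by
      simpa [hF] using mulVec_mono_of_nonneg hM.inv_apply_nonneg ha
    have hFcont : Continuous F := by
      have hdiag : Continuous fun x => b.toContinuousBilinearMap x x :=
        b.toContinuousBilinearMap.continuous₂.comp (continuous_id.prodMk continuous_id)
      fun_prop
    have hmaps : Set.MapsTo F {x | 0 ≤ x ∧ l x ≤ z} {x | 0 ≤ x ∧ l x ≤ z} :=
      fun x ⟨hx, hxz⟩ => ⟨hF0.trans (hFmono Set.self_mem_Ici hx hx), hA1 x hx hxz⟩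
    have hbdd : BddAbove (Set.range fun k => F^[k] 0) :=
      (hl.bddAbove z).mono <| Set.range_subset_iff.2 fun k =>
        hmaps.iterate k ⟨le_rfl, (map_zero l).trans_le hz⟩
    obtain ⟨x, hx, hFx⟩ := Function.exists_isFixedPt_of_monotoneOn_Ici hFmono hFcont hF0 hbdd
    exact ⟨x, hx, (hsol x).2 hFx⟩
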